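/- arXiv:2604.16961 — 2 statements merged into one kernel-verified Lean document; each statement's English description precedes it below -/
import Mathlib

section
/- Define g(x) := (x+1)ln(x+1) − x ln x for x > 0. Then for all M > 0, N > 0 and Δ ≥ 0, the quantity F(N, M, Δ) := −g(N) + ln(M+1) + ln((M+1)/M)·(N + Δ) is nonnegative, and F(N, M, Δ) = 0 if and only if N = M and Δ = 0. -/
/-- `g(x) = (x+1)ln(x+1) − x ln x`. -/
noncomputable def gFun (x : ℝ) : ℝ := (x + 1) * Real.log (x + 1) - x * Real.log x

/-! Splitting off the displacement, `F(N, M, Δ) = D(N, M) + Δ ln((M+1)/M)`, where `D` is the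
relative entropy of the undisplaced thermal states. Strict concavity of `ln` at the points `M/N`
and `1` with weights `N/(N+1)` and `1/(N+1)` gives `D(N, M) > 0` for `N ≠ M`, while
`ln((M+1)/M) > 0`. -/

open Real

noncomputable def thermalRelEntropy (N M : ℝ) : ℝ :=
  (N + 1) * log ((M + 1) / (N + 1)) - N * log (M / N)

lemma thermalRelEntropy_self {N : ℝ} (hN : 0 < N) : thermalRelEntropy N N = 0 := by
  simp [thermalRelEntropy, div_self hN.ne', div_self (by positivity : N + 1 ≠ 0)]

lemma thermalRelEntropy_pos {N M : ℝ} (hN : 0 < N) (hM : 0 < M) (hne : N ≠ M) :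
    0 < thermalRelEntropy N M := by
  have hN1 : 0 < N + 1 := by positivity
  have hconc := strictConcaveOn_log_Ioi.2 (Set.mem_Ioi.2 (div_pos hM hN)) (Set.mem_Ioi.2 one_pos)
    (by rwa [Ne, div_eq_one_iff_eq hN.ne', eq_comm]) (div_pos hN hN1) (div_pos one_pos hN1)
    (by field_simp)
  have hmid : N / (N + 1) * (M / N) + 1 / (N + 1) * 1 = (M + 1) / (N + 1) := by
    field_simp
  simp only [smul_eq_mul, hmid, log_one, mul_zero, add_zero] at hconc
  rw [thermalRelEntropy, sub_pos]
  calc N * log (M / N) = (N + 1) * (N / (N + 1) * log (M / N)) := by field_simp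
    _ < (N + 1) * log ((M + 1) / (N + 1)) := mul_lt_mul_of_pos_left hconc hN1

lemma thermalRelEntropy_nonneg {N M : ℝ} (hN : 0 < N) (hM : 0 < M) :
    0 ≤ thermalRelEntropy N M := by
  rcases eq_or_ne N M with rfl | hne
  · exact (thermalRelEntropy_self hN).ge
  · exact (thermalRelEntropy_pos hN hM hne).le

lemma thermalRelEntropy_eq_zero_iff {N M : ℝ} (hN : 0 < N) (hM : 0 < M) :
    thermalRelEntropy N M = 0 ↔ N = M :=
  ⟨fun h ↦ by_contra fun hne ↦ (thermalRelEntropy_pos hN hM hne).ne' h,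
    by rintro rfl; exact thermalRelEntropy_self hN⟩

lemma neg_gFun_add_log_eq {N M : ℝ} (hN : 0 < N) (hM : 0 < M) (Δ : ℝ) :
    -gFun N + log (M + 1) + log ((M + 1) / M) * (N + Δ) =
      thermalRelEntropy N M + log ((M + 1) / M) * Δ := by
  have hM1 : M + 1 ≠ 0 := by positivity
  have hN1 : N + 1 ≠ 0 := by positivity
  rw [gFun, thermalRelEntropy, log_div hM1 hM.ne', log_div hM1 hN1, log_div hM.ne' hN.ne']
  ring

/-- The quantum relative entropy between displaced thermal states,
`F(N, M, Δ) = −g(N) + ln(M+1) + ln((M+1)/M)(N + Δ)`, is nonnegative for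
`N, M > 0`, `Δ ≥ 0`, and vanishes if and only if `N = M` and `Δ = 0`. -/
theorem thermal_relative_entropy_nonneg (M N Δ : ℝ)
    (hM : 0 < M) (hN : 0 < N) (hΔ : 0 ≤ Δ) :
    0 ≤ -gFun N + Real.log (M + 1) + Real.log ((M + 1) / M) * (N + Δ) ∧
    (-gFun N + Real.log (M + 1) + Real.log ((M + 1) / M) * (N + Δ) = 0 ↔
      N = M ∧ Δ = 0) := by
  have hlog : 0 < log ((M + 1) / M) := log_pos (by rw [lt_div_iff₀ hM]; linarith)
  have hD := thermalRelEntropy_nonneg hN hM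
  rw [neg_gFun_add_log_eq hN hM, ← thermalRelEntropy_eq_zero_iff hN hM]
  refine ⟨by positivity, ?_⟩
  rw [add_eq_zero_iff_of_nonneg hD (by positivity), mul_eq_zero, or_iff_right hlog.ne']
end

section
/- Let M ≥ 0, N > 0 and Δ ≥ 0, and for s ≤ 0 define f(s) := s·M + ln(N + 1 − N·e^{s}) + Δ·(1 − e^{s})/(N + 1 − N·e^{s}) (note N + 1 − N e^{s} ≥ 1 > 0 for s ≤ 0, so f is well defined). Then: (i) f(0) = 0, hence D_P := sup_{s ≤ 0} f(s) ≥ 0; (ii) f is differentiable at 0 with f′(0) = M − N − Δ; and (iii) if M < N + Δ then D_P > 0. -/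
/-!
Since `f 0 = 0`, the supremum is at least `0`. For `s ≤ 0` the denominator `N + 1 - N eˢ` is at
least `1`, so `f` is bounded above on `(-∞, 0]` and the supremum is a genuine one. If
`M < N + Δ` the derivative `M - N - Δ` of `f` at `0` is negative, so `f` is positive just to the
left of `0`, and the supremum is positive.
-/

open Real Set Filter Topology

noncomputable def countingExponent (M N Δ s : ℝ) : ℝ :=
  s * M + log (N + 1 - N * exp s) + Δ * (1 - exp s) / (N + 1 - N * exp s)

theorem HasDerivAt.exists_lt_apply_lt_of_neg {f : ℝ → ℝ} {f' a : ℝ} (hf : HasDerivAt f f' a)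
    (hf' : f' < 0) : ∃ s < a, f a < f s := by
  have hslope : ∀ᶠ s in 𝓝[<] a, slope f a s < 0 :=
    ((hasDerivAt_iff_tendsto_slope_left_right.mp hf).1).eventually_lt_const hf'
  obtain ⟨s, hs_slope, hs⟩ := (hslope.and self_mem_nhdsWithin).exists
  exact ⟨s, hs, (slope_neg_iff_of_le hs.le).mp (slope_comm f a s ▸ hs_slope)⟩

theorem one_le_add_one_sub_mul_exp {N s : ℝ} (hN : 0 ≤ N) (hs : s ≤ 0) :
    1 ≤ N + 1 - N * exp s := by
  nlinarith [exp_le_one_iff.mpr hs]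

namespace countingExponent

variable (M N Δ : ℝ)

@[simp]
theorem apply_zero : countingExponent M N Δ 0 = 0 := by
  simp [countingExponent]

theorem hasDerivAt_zero : HasDerivAt (countingExponent M N Δ) (M - N - Δ) 0 := by
  have hden : HasDerivAt (fun s => N + 1 - N * exp s) (-N) 0 := by
    simpa using ((hasDerivAt_exp 0).const_mul N).const_sub (N + 1)
  have hden0 : N + 1 - N * exp 0 ≠ 0 := by simp
  have hnum : HasDerivAt (fun s => Δ * (1 - exp s)) (-Δ) 0 := by
    simpa using ((hasDerivAt_exp 0).const_sub 1).const_mul Δ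
  have hsum := (((hasDerivAt_id (0 : ℝ)).mul_const M).add (hden.log hden0)).add
    (hnum.div hden hden0)
  exact hsum.congr_deriv (by rw [exp_zero]; ring)

variable {M N Δ}

theorem le_log_add_abs {s : ℝ} (hM : 0 ≤ M) (hN : 0 ≤ N) (hs : s ≤ 0) :
    countingExponent M N Δ s ≤ log (N + 1) + |Δ| := by
  have hden := one_le_add_one_sub_mul_exp hN hs
  have hexp_pos := exp_pos s
  have hexp_le := exp_le_one_iff.mpr hs
  have hlinear : s * M ≤ 0 := mul_nonpos_of_nonpos_of_nonneg hs hM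
  have hlog : log (N + 1 - N * exp s) ≤ log (N + 1) :=
    log_le_log (by linarith) (by nlinarith)
  have hratio : Δ * (1 - exp s) / (N + 1 - N * exp s) ≤ |Δ| := by
    rw [mul_div_assoc]
    have h0 : 0 ≤ (1 - exp s) / (N + 1 - N * exp s) := div_nonneg (by linarith) (by linarith)
    have h1 : (1 - exp s) / (N + 1 - N * exp s) ≤ 1 := by
      rw [div_le_one (by linarith)]; nlinarith
    calc Δ * ((1 - exp s) / (N + 1 - N * exp s))
        ≤ |Δ| * ((1 - exp s) / (N + 1 - N * exp s)) := by gcongr; exact le_abs_self Δ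
      _ ≤ |Δ| := mul_le_of_le_one_right (abs_nonneg Δ) h1
  unfold countingExponent
  linarith

theorem bddAbove_image_Iic (hM : 0 ≤ M) (hN : 0 ≤ N) :
    BddAbove (countingExponent M N Δ '' Iic 0) :=
  ⟨log (N + 1) + |Δ|, forall_mem_image.mpr fun _ hs => le_log_add_abs hM hN hs⟩

end countingExponent

theorem photon_counting_exponent_general (M N Δ : ℝ)
    (hM : 0 ≤ M) (hN : 0 < N) :
    let f : ℝ → ℝ := fun s =>
      s * M + Real.log (N + 1 - N * Real.exp s) +
        Δ * (1 - Real.exp s) / (N + 1 - N * Real.exp s)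
    let DP : ℝ := sSup (f '' Set.Iic 0)
    f 0 = 0 ∧ 0 ≤ DP ∧ HasDerivAt f (M - N - Δ) 0 ∧ (M < N + Δ → 0 < DP) := by
  intro f DP
  have hf0 : f 0 = 0 := countingExponent.apply_zero M N Δ
  have hbdd : BddAbove (f '' Iic 0) := countingExponent.bddAbove_image_Iic hM hN.le
  have hderiv : HasDerivAt f (M - N - Δ) 0 := countingExponent.hasDerivAt_zero M N Δ
  have hDP : ∀ s ≤ 0, f s ≤ DP := fun s hs => le_csSup hbdd (mem_image_of_mem f hs)
  refine ⟨hf0, hf0 ▸ hDP 0 le_rfl, hderiv, fun hlt => ?_⟩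
  obtain ⟨s, hs, hfs⟩ := hderiv.exists_lt_apply_lt_of_neg (by linarith)
  exact (hf0 ▸ hfs).trans_le (hDP s hs.le)

/-- Properties of the photon-counting threshold exponent
`D_P = sup_{s ≤ 0} f(s)` with
`f(s) = sM + ln(N+1 − N eˢ) + Δ(1 − eˢ)/(N+1 − N eˢ)`:
(i) `f(0) = 0`, hence `D_P ≥ 0`; (ii) `f` is differentiable at `0` with
`f′(0) = M − N − Δ`; (iii) if `M < N + Δ` then `D_P > 0`. -/
theorem photon_counting_exponent (M N Δ : ℝ)
    (hM : 0 ≤ M) (hN : 0 < N) (hΔ : 0 ≤ Δ) :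
    let f : ℝ → ℝ := fun s =>
      s * M + Real.log (N + 1 - N * Real.exp s) +
        Δ * (1 - Real.exp s) / (N + 1 - N * Real.exp s)
    let DP : ℝ := sSup (f '' Set.Iic 0)
    f 0 = 0 ∧ 0 ≤ DP ∧ HasDerivAt f (M - N - Δ) 0 ∧ (M < N + Δ → 0 < DP) :=
  photon_counting_exponent_general M N Δ hM hN
end
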